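/- The rank levels of (P([n]), ⪯₂) are rank unimodal: there exists j such that, writing p_i for the number of subsets of {1,...,n} whose elements sum to i, one has p₀ ≤ p₁ ≤ ⋯ ≤ p_j and p_j ≥ p_{j+1} ≥ ⋯ ≥ p_{n(n+1)/2}. -/

import Mathlib

/-- The number of subsets of `{1,…,n}` whose elements sum to `i`. -/
def levelCard (n i : ℕ) : ℕ :=
  (((Finset.Icc 1 n).powerset).filter (fun s => s.sum id = i)).card

/-- `M n`: the maximum over `K ∈ ℕ` of the number of subsets of `{1,…,n}`
whose elements sum to `K`. -/
noncomputable def M (n : ℕ) : ℕ := ⨆ K : ℕ, levelCard n K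

/-!
An sl₂ argument with explicit operators on functions on `P([n])`. The covering steps of `⪯₂`
(insert `1`, or replace `i` by `i + 1`) give a raising operator `E` from level `k` to
level `k + 1`. For the product weights `setWeight`, the adjoint `F` of `E` satisfies
`FE - EF = n(n+1) - 4k` on level `k`, so `‖Ex‖² = ‖Fx‖² + (n(n+1) - 4k)‖x‖²` and `E` is injective
on level `k` whenever `4k < n(n+1)`; hence `p_k ≤ p_{k+1}` there. Complementation in `{1,…,n}`
gives `p_k = p_{N-k}` with `N = n(n+1)/2`, which yields the decreasing half.
-/

open Finset

theorem eq_zero_of_map_eq_zero_of_commutator {ι 𝕜 : Type*} [Field 𝕜] [LinearOrder 𝕜]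
    [IsStrictOrderedRing 𝕜] {P : Finset ι} {μ h : ι → 𝕜} {E F : (ι → 𝕜) → ι → 𝕜}
    (hμ : ∀ s ∈ P, 0 < μ s)
    (hadj : ∀ x y, ∑ s ∈ P, μ s * (E x s * y s) = ∑ s ∈ P, μ s * (x s * F y s))
    (hcomm : ∀ x, ∀ s ∈ P, F (E x) s - E (F x) s = h s * x s)
    {x : ι → 𝕜} (hx : ∀ s ∈ P, x s ≠ 0 → 0 < h s) (hEx : ∀ s ∈ P, E x s = 0) :
    ∀ s ∈ P, x s = 0 := by
  have hterm : ∀ s ∈ P, 0 ≤ μ s * (h s * (x s * x s)) := fun s hs => by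
    by_cases hxs : x s = 0
    · simp [hxs]
    · exact mul_nonneg (hμ s hs).le (mul_nonneg (hx s hs hxs).le (mul_self_nonneg _))
  have hsum : ∑ s ∈ P, μ s * (F x s * F x s) + ∑ s ∈ P, μ s * (h s * (x s * x s)) = 0 :=
    calc _ = ∑ s ∈ P, μ s * (E (F x) s * x s) + ∑ s ∈ P, μ s * (h s * (x s * x s)) := by
            rw [hadj]
      _ = ∑ s ∈ P, μ s * (x s * F (E x) s) := by
            rw [← sum_add_distrib]
            refine sum_congr rfl fun s hs => ?_
            rw [eq_add_of_sub_eq' (hcomm x s hs)]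
            ring
      _ = ∑ s ∈ P, μ s * (E x s * E x s) := (hadj x (E x)).symm
      _ = 0 := sum_eq_zero fun s hs => by simp [hEx s hs]
  have hzero := (sum_eq_zero_iff_of_nonneg hterm).mp <| by
    linarith [sum_nonneg hterm,
      sum_nonneg fun s (hs : s ∈ P) => mul_nonneg (hμ s hs).le (mul_self_nonneg (F x s))]
  intro s hs
  by_contra hxs
  exact (mul_pos (hμ s hs) (mul_pos (hx s hs hxs) (mul_self_pos.mpr hxs))).ne' (hzero s hs)

namespace SubsetSum

-- Move `i < n` is a covering step of `⪯₂`: move `0` inserts `1`, move `i > 0` replaces `i` by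
-- `i + 1`.
def CanRaise (i : ℕ) (s : Finset ℕ) : Prop :=
  if i = 0 then 1 ∉ s else i ∈ s ∧ i + 1 ∉ s

def raise (i : ℕ) (s : Finset ℕ) : Finset ℕ :=
  if i = 0 then insert 1 s else insert (i + 1) (s.erase i)

def CanLower (i : ℕ) (t : Finset ℕ) : Prop :=
  if i = 0 then 1 ∈ t else i + 1 ∈ t ∧ i ∉ t

def lower (i : ℕ) (t : Finset ℕ) : Finset ℕ :=
  if i = 0 then t.erase 1 else insert i (t.erase (i + 1))

instance (i : ℕ) (s : Finset ℕ) : Decidable (CanRaise i s) := by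
  unfold CanRaise; infer_instance

instance (i : ℕ) (t : Finset ℕ) : Decidable (CanLower i t) := by
  unfold CanLower; infer_instance

variable {i j : ℕ} {s t : Finset ℕ}

lemma canLower_raise (h : CanRaise i s) : CanLower i (raise i s) := by
  unfold CanRaise CanLower raise at *; split_ifs at * <;> simp_all

lemma lower_raise (h : CanRaise i s) : lower i (raise i s) = s := by
  unfold CanRaise lower raise at *; split_ifs at * <;> ext a <;> simp <;> grind

lemma canRaise_lower (h : CanLower i t) : CanRaise i (lower i t) := by
  unfold CanLower CanRaise lower at *; split_ifs at * <;> simp_all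

lemma raise_lower (h : CanLower i t) : raise i (lower i t) = t := by
  unfold CanLower lower raise at *; split_ifs at * <;> ext a <;> simp <;> grind

lemma sum_raise (h : CanRaise i s) : ∑ a ∈ raise i s, a = ∑ a ∈ s, a + 1 := by
  unfold CanRaise raise at *
  split_ifs at *
  · rw [sum_insert h, add_comm]
  · rw [sum_insert (by simp [h.2]), ← add_sum_erase _ _ h.1]
    omega

lemma raise_subset {n : ℕ} (hs : s ⊆ Icc 1 n) (hi : i < n) :
    raise i s ⊆ Icc 1 n := by
  unfold raise
  split_ifs
  · exact insert_subset (by simp; omega) hs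
  · exact insert_subset (by simp; omega) ((erase_subset _ _).trans hs)

lemma lower_subset {n : ℕ} (ht : t ⊆ Icc 1 n) (hi : i < n) :
    lower i t ⊆ Icc 1 n := by
  unfold lower
  split_ifs
  · exact (erase_subset _ _).trans ht
  · exact insert_subset (by simp; omega) ((erase_subset _ _).trans ht)

lemma canRaise_and_canLower_raise_iff (hij : i ≠ j) :
    (CanRaise j t ∧ CanLower i (raise j t)) ↔ (CanLower i t ∧ CanRaise j (lower i t)) := by
  unfold CanRaise CanLower raise lower; split_ifs <;> simp <;> grind

lemma lower_raise_comm (hij : i ≠ j) :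
    lower i (raise j t) = raise j (lower i t) := by
  unfold raise lower; split_ifs <;> ext a <;> simp <;> grind

/- Any positive weights make `lowerOp` the `setWeight`-adjoint of `raiseOp`; these are the ones
for which `weight n n = 0` and `weight_succ_sub` hold, so that the commutator is diagonal
(`sum_weight_mul_balance`). -/
def weight (n i : ℕ) : ℚ :=
  if i = 0 then n * (n + 1) else 2 * (n * (n + 1) - i * (i + 1))

def elemWeight (n j : ℕ) : ℚ := ∏ i ∈ range j, weight n i

def setWeight (n : ℕ) (s : Finset ℕ) : ℚ := ∏ j ∈ s, elemWeight n j

lemma weight_pos {n : ℕ} (hi : i < n) : 0 < weight n i := by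
  have hin : (i : ℚ) + 1 ≤ n := by exact_mod_cast hi
  unfold weight
  split_ifs <;> nlinarith

lemma weight_self {n : ℕ} (hn : n ≠ 0) : weight n n = 0 := by
  simp [weight, hn]

lemma weight_succ_sub (n b : ℕ) :
    weight n (b + 1) - (if b = 0 then 2 else 1) * weight n b = -4 * (b + 1 : ℕ) := by
  unfold weight; split_ifs <;> push_cast <;> simp_all <;> ring

lemma setWeight_pos {n : ℕ} (hs : s ⊆ Icc 1 n) : 0 < setWeight n s :=
  prod_pos fun j hj => prod_pos fun i hi =>
    weight_pos (by have := mem_Icc.mp (hs hj); simp at hi; omega)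

lemma setWeight_raise {n : ℕ} (h : CanRaise i s) :
    setWeight n (raise i s) = weight n i * setWeight n s := by
  unfold CanRaise raise setWeight at *
  split_ifs at * with hi
  · simp [prod_insert h, elemWeight, hi]
  · rw [prod_insert (by simp [h.2]), ← mul_prod_erase _ _ h.1, elemWeight, elemWeight,
      prod_range_succ]
    ring

def raiseOp (n : ℕ) (x : Finset ℕ → ℚ) (t : Finset ℕ) : ℚ :=
  ∑ i ∈ range n, if CanLower i t then x (lower i t) else 0

def lowerOp (n : ℕ) (x : Finset ℕ → ℚ) (s : Finset ℕ) : ℚ :=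
  ∑ i ∈ range n, if CanRaise i s then weight n i * x (raise i s) else 0

lemma sum_setWeight_raiseOp_mul (n : ℕ) (x y : Finset ℕ → ℚ) :
    ∑ t ∈ (Icc 1 n).powerset, setWeight n t * (raiseOp n x t * y t) =
      ∑ s ∈ (Icc 1 n).powerset, setWeight n s * (x s * lowerOp n y s) := by
  simp only [raiseOp, lowerOp, sum_mul, mul_sum, mul_ite, ite_mul, mul_zero, zero_mul]
  rw [sum_comm, sum_comm (s := (Icc 1 n).powerset)]
  refine sum_congr rfl fun i hi => ?_
  rw [← sum_filter, ← sum_filter]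
  refine sum_nbij' (lower i) (raise i) ?_ ?_ ?_ ?_ ?_ <;> simp only [mem_filter, mem_powerset]
  · exact fun t ⟨ht, h⟩ => ⟨lower_subset ht (mem_range.mp hi), canRaise_lower h⟩
  · exact fun s ⟨hs, h⟩ => ⟨raise_subset hs (mem_range.mp hi), canLower_raise h⟩
  · exact fun t ⟨_, h⟩ => raise_lower h
  · exact fun s ⟨_, h⟩ => lower_raise h
  · intro t ⟨_, h⟩
    have hw := setWeight_raise (n := n) (canRaise_lower h)
    rw [raise_lower h] at hw
    rw [raise_lower h, hw]
    ring

def balance (i : ℕ) (s : Finset ℕ) : ℚ :=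
  (if CanRaise i s then 1 else 0) - (if CanLower i s then 1 else 0)

lemma balance_empty : balance i ∅ = if i = 0 then 1 else 0 := by
  by_cases hi : i = 0 <;> simp [balance, CanRaise, CanLower, hi]

lemma balance_insert {a : ℕ} (ha : a ∉ s) (ha0 : a ≠ 0) :
    balance i (insert a s) = balance i s + (if i = a then 1 else 0) -
      if i + 1 = a then (if i = 0 then 2 else 1) else 0 := by
  unfold balance CanRaise CanLower; split_ifs <;> grind

lemma sum_weight_mul_balance {n : ℕ} (hs : s ⊆ Icc 1 n) :
    ∑ i ∈ range n, weight n i * balance i s = n * (n + 1) - 4 * ∑ a ∈ s, (a : ℚ) := by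
  induction s using Finset.induction_on with
  | empty =>
    simp only [balance_empty, mul_ite, mul_one, mul_zero, sum_ite_eq', mem_range, sum_empty]
    split_ifs with hn
    · simp [weight]
    · simp [show n = 0 by omega]
  | @insert a s ha ih =>
    obtain ⟨ha1, han⟩ := mem_Icc.mp (hs (mem_insert_self a s))
    obtain ⟨b, rfl⟩ : ∃ b, a = b + 1 := ⟨a - 1, by omega⟩
    have hb : b ∈ range n := mem_range.mpr (by omega)
    have hsucc : (if b + 1 ∈ range n then weight n (b + 1) else 0) = weight n (b + 1) := by
      split_ifs with h
      · rfl
      · rw [show b + 1 = n by simp at h; omega, weight_self (by omega)]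
    simp only [balance_insert ha (by omega), mul_sub, mul_add, sum_sub_distrib, sum_add_distrib,
      mul_ite, mul_one, mul_zero, add_left_inj, sum_ite_eq', if_pos hb, hsucc,
      ih ((subset_insert _ _).trans hs), sum_insert ha]
    have := weight_succ_sub n b
    push_cast at this ⊢
    split_ifs at this ⊢ <;> linarith

lemma raise_lower_term (x : Finset ℕ → ℚ) (i j : ℕ) (t : Finset ℕ) :
    ((if CanRaise j t ∧ CanLower i (raise j t) then x (lower i (raise j t)) else 0) -
      if CanLower i t ∧ CanRaise j (lower i t) then x (raise j (lower i t)) else 0) =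
      if i = j then balance j t * x t else 0 := by
  by_cases hij : i = j
  · subst hij
    simp only [and_iff_left_of_imp canLower_raise, and_iff_left_of_imp canRaise_lower,
      balance, sub_mul]
    congr 1 <;> split_ifs with h <;> simp [lower_raise, raise_lower, h]
  · simp only [if_neg hij, canRaise_and_canLower_raise_iff hij, lower_raise_comm hij, sub_self]

lemma lowerOp_raiseOp_sub_raiseOp_lowerOp (n : ℕ) (x : Finset ℕ → ℚ) (t : Finset ℕ) :
    lowerOp n (raiseOp n x) t - raiseOp n (lowerOp n x) t =
      (∑ j ∈ range n, weight n j * balance j t) * x t := by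
  have hFE : lowerOp n (raiseOp n x) t = ∑ j ∈ range n, weight n j * ∑ i ∈ range n,
      if CanRaise j t ∧ CanLower i (raise j t) then x (lower i (raise j t)) else 0 := by
    simp only [lowerOp, raiseOp, ite_and, mul_sum, mul_ite, mul_zero]
    refine sum_congr rfl fun j _ => ?_
    split_ifs <;> simp
  have hEF : raiseOp n (lowerOp n x) t = ∑ j ∈ range n, weight n j * ∑ i ∈ range n,
      if CanLower i t ∧ CanRaise j (lower i t) then x (raise j (lower i t)) else 0 := by
    simp only [lowerOp, raiseOp, ite_and, mul_sum, mul_ite, mul_zero]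
    rw [sum_comm]
    refine sum_congr rfl fun i _ => ?_
    split_ifs <;> simp
  rw [hFE, hEF, ← sum_sub_distrib, sum_mul]
  refine sum_congr rfl fun j hj => ?_
  rw [← mul_sub, ← sum_sub_distrib]
  simp only [raise_lower_term, sum_ite_eq', if_pos hj, mul_assoc]

def raiseLinearMap (n : ℕ) : (Finset ℕ → ℚ) →ₗ[ℚ] Finset ℕ → ℚ where
  toFun := raiseOp n
  map_add' x y := by
    ext t
    simp only [raiseOp, Pi.add_apply, ← sum_add_distrib]
    exact sum_congr rfl fun i _ => by split_ifs <;> simp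
  map_smul' c x := by
    ext t
    simp only [raiseOp, Pi.smul_apply, smul_eq_mul, mul_sum, RingHom.id_apply]
    exact sum_congr rfl fun i _ => by split_ifs <;> simp

def level (n k : ℕ) : Finset (Finset ℕ) :=
  (Icc 1 n).powerset.filter fun s => s.sum id = k

lemma levelCard_eq_card_level (n k : ℕ) : levelCard n k = (level n k).card := rfl

lemma mem_level {n k : ℕ} : s ∈ level n k ↔ s ⊆ Icc 1 n ∧ ∑ a ∈ s, a = k := by
  simp [level]

lemma raiseOp_eq_zero_of_notMem_level {n k : ℕ} {x : Finset ℕ → ℚ}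
    (hx : ∀ s, x s ≠ 0 → s ∈ level n k) (ht : t ⊆ Icc 1 n) (htk : t ∉ level n (k + 1)) :
    raiseOp n x t = 0 := by
  refine sum_eq_zero fun i _ => ite_eq_right_iff.mpr fun hi => ?_
  by_contra hne
  obtain ⟨-, hsum⟩ := mem_level.mp (hx _ hne)
  have hsum_t : ∑ a ∈ t, a = k + 1 := by
    rw [← raise_lower hi, sum_raise (canRaise_lower hi), hsum]
  exact htk (mem_level.mpr ⟨ht, hsum_t⟩)

lemma eq_zero_of_raiseOp_eq_zero {n k : ℕ} (hk : 4 * k < n * (n + 1)) {x : Finset ℕ → ℚ}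
    (hx : ∀ s, x s ≠ 0 → s ∈ level n k) (hEx : ∀ t ∈ level n (k + 1), raiseOp n x t = 0) :
    ∀ s ∈ level n k, x s = 0 := by
  have hzero := eq_zero_of_map_eq_zero_of_commutator (P := (Icc 1 n).powerset)
    (h := fun s => n * (n + 1) - 4 * ∑ a ∈ s, (a : ℚ))
    (fun s hs => setWeight_pos (mem_powerset.mp hs)) (sum_setWeight_raiseOp_mul n)
    (fun x s hs => by
      rw [lowerOp_raiseOp_sub_raiseOp_lowerOp, sum_weight_mul_balance (mem_powerset.mp hs)])
    (x := x) (fun s _ hs => by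
      rw [← Nat.cast_sum, (mem_level.mp (hx s hs)).2, sub_pos]
      exact_mod_cast hk)
    (fun t ht => by
      by_cases htk : t ∈ level n (k + 1)
      · exact hEx t htk
      · exact raiseOp_eq_zero_of_notMem_level hx (mem_powerset.mp ht) htk)
  exact fun s hs => hzero s (mem_powerset.mpr (mem_level.mp hs).1)

lemma levelCard_le_levelCard_succ {n k : ℕ} (hk : 4 * k < n * (n + 1)) :
    levelCard n k ≤ levelCard n (k + 1) := by
  let Φ : (level n k → ℚ) →ₗ[ℚ] level n (k + 1) → ℚ :=
    LinearMap.funLeft ℚ ℚ Subtype.val ∘ₗ raiseLinearMap n ∘ₗ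
      Function.ExtendByZero.linearMap ℚ Subtype.val
  have hΦ : Function.Injective Φ := by
    refine (injective_iff_map_eq_zero Φ).mpr fun x hx => funext fun s => ?_
    have hext : ∀ s : level n k, Function.extend Subtype.val x 0 s.val = x s :=
      Subtype.val_injective.extend_apply x 0
    rw [← hext]
    refine eq_zero_of_raiseOp_eq_zero hk (fun s hs => ?_) (fun t ht => congrFun hx ⟨t, ht⟩) s s.2
    by_contra hsk
    exact hs (Function.extend_apply' _ _ _ fun ⟨s', hs'⟩ => hsk (hs' ▸ s'.2))
  simpa [levelCard_eq_card_level] using LinearMap.finrank_le_finrank_of_injective hΦ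

lemma sum_Icc_one_mul_two (n : ℕ) : (∑ a ∈ Icc 1 n, a) * 2 = n * (n + 1) := by
  induction n with
  | zero => rfl
  | succ n ih => rw [sum_Icc_succ_top (by omega), add_mul, ih]; ring

lemma sdiff_mem_level {n k : ℕ} (hs : s ∈ level n k) :
    Icc 1 n \ s ∈ level n (n * (n + 1) / 2 - k) := by
  obtain ⟨hsub, hsum⟩ := mem_level.mp hs
  refine mem_level.mpr ⟨sdiff_subset, ?_⟩
  have := sum_sdiff hsub (f := id)
  have := sum_Icc_one_mul_two n
  simp only [id] at *
  omega

lemma levelCard_sub {n k : ℕ} (hk : k ≤ n * (n + 1) / 2) :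
    levelCard n (n * (n + 1) / 2 - k) = levelCard n k := by
  simp only [levelCard_eq_card_level]
  refine card_nbij' (Icc 1 n \ ·) (Icc 1 n \ ·) (fun s hs => ?_) (fun s hs => sdiff_mem_level hs)
    (fun s hs => Finset.sdiff_sdiff_eq_self (mem_level.mp hs).1)
    (fun s hs => Finset.sdiff_sdiff_eq_self (mem_level.mp hs).1)
  simpa [Nat.sub_sub_self hk] using sdiff_mem_level hs

lemma levelCard_succ_le_levelCard {n k : ℕ} (hk : n * (n + 1) < 4 * (k + 1))
    (hkN : k + 1 ≤ n * (n + 1) / 2) : levelCard n (k + 1) ≤ levelCard n k := by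
  have hN := (Nat.even_mul_succ_self n).two_dvd
  rw [← levelCard_sub hkN, ← levelCard_sub (k.le_succ.trans hkN),
    show n * (n + 1) / 2 - k = n * (n + 1) / 2 - (k + 1) + 1 by omega]
  exact levelCard_le_levelCard_succ (by omega)

end SubsetSum

/-- Rank unimodality of the rank levels of `(P([n]), ⪯₂)`: writing `pᵢ` for the
number of subsets of `{1,…,n}` summing to `i`, there is a `j` such that
`p₀ ≤ p₁ ≤ ⋯ ≤ p_j` and `p_j ≥ p_{j+1} ≥ ⋯ ≥ p_{n(n+1)/2}`. -/
theorem stmt12 (n : ℕ) :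
    ∃ j : ℕ, j ≤ n * (n + 1) / 2 ∧
      (∀ a b : ℕ, a ≤ b → b ≤ j → levelCard n a ≤ levelCard n b) ∧
      (∀ a b : ℕ, j ≤ a → a ≤ b → b ≤ n * (n + 1) / 2 →
        levelCard n b ≤ levelCard n a) := by
  have hN := (Nat.even_mul_succ_self n).two_dvd
  refine ⟨(n * (n + 1) / 2 + 1) / 2, by omega, fun a b hab hbj => ?_, fun a b hja hab hbN => ?_⟩
  · refine monotoneOn_of_le_add_one Set.ordConnected_Iic (fun k _ _ hk => ?_)
      (Set.mem_Iic.mpr (hab.trans hbj)) hbj hab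
    exact SubsetSum.levelCard_le_levelCard_succ (by rw [Set.mem_Iic] at hk; omega)
  · refine antitoneOn_of_add_one_le Set.ordConnected_Icc (fun k _ hk hk1 => ?_)
      ⟨hja, hab.trans hbN⟩ ⟨hja.trans hab, hbN⟩ hab
    exact SubsetSum.levelCard_succ_le_levelCard (by rw [Set.mem_Icc] at hk; omega)
      (Set.mem_Icc.mp hk1).2
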